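/- arXiv:2601.22969 — 3 statements merged into one kernel-verified Lean document; each statement's English description precedes it below -/
import Mathlib

section
/- Let X ⊆ ℝ^d, let V be a real symmetric positive definite d×d matrix, let θ*, θ̂ ∈ ℝ^d and β ≥ 0 satisfy ‖θ̂ - θ*‖_V ≤ β. Suppose x_t ∈ X satisfies ⟨θ̂, x_t⟩ + β·‖x_t‖_{V⁻¹} ≥ ⟨θ̂, x⟩ + β·‖x‖_{V⁻¹} for every x ∈ X. Then for every x ∈ X, ⟨θ*, x⟩ - ⟨θ*, x_t⟩ ≤ 2·β·‖x_t‖_{V⁻¹}. -/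
open Matrix

/-!
Both confidence steps rest on the Cauchy–Schwarz inequality for the dual pair of norms
`‖·‖_V`, `‖·‖_{V⁻¹}`: `|⟨u, x⟩| ≤ ‖u‖_V ‖x‖_{V⁻¹}`. With `u = θ̂ - θ*` and `‖u‖_V ≤ β`, the true
reward of `x` is at most its upper confidence bound, which by optimality of `x_t` is at most
that of `x_t`, which exceeds the true reward of `x_t` by at most `2 β ‖x_t‖_{V⁻¹}`.
-/

namespace Matrix

variable {n : Type*} [Fintype n] [DecidableEq n]

theorem PosSemidef.dotProduct_mulVec_sq_le {R : Type*} [CommRing R] [LinearOrder R]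
    [IsStrictOrderedRing R] [StarRing R] [TrivialStar R] [StarOrderedRing R]
    {V : Matrix n n R} (hV : V.PosSemidef) (u w : n → R) :
    (u ⬝ᵥ (V *ᵥ w)) ^ 2 ≤ (u ⬝ᵥ (V *ᵥ u)) * (w ⬝ᵥ (V *ᵥ w)) := by
  have hsymm : LinearMap.IsSymm V.toBilin' := LinearMap.BilinForm.isSymm_iff.mp <|
    isSymm_toBilin'_iff_isSymm.mpr <| isHermitian_iff_isSymm.mp hV.isHermitian
  simpa only [toBilin'_apply'] using V.toBilin'.apply_sq_le_of_symm
    (fun x ↦ by simpa [toBilin'_apply'] using hV.dotProduct_mulVec_nonneg x) hsymm u w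

theorem PosDef.abs_dotProduct_le_sqrt_mul_sqrt_inv {V : Matrix n n ℝ} (hV : V.PosDef)
    (u x : n → ℝ) :
    |u ⬝ᵥ x| ≤ √(u ⬝ᵥ (V *ᵥ u)) * √(x ⬝ᵥ (V⁻¹ *ᵥ x)) := by
  set w := V⁻¹ *ᵥ x
  have hVw : V *ᵥ w = x := by
    rw [mulVec_mulVec, mul_nonsing_inv V (isUnit_iff_ne_zero.mpr hV.det_pos.ne'), one_mulVec]
  have hu : 0 ≤ u ⬝ᵥ (V *ᵥ u) := by simpa using hV.posSemidef.dotProduct_mulVec_nonneg u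
  rw [← Real.sqrt_mul hu, ← hVw, dotProduct_comm (V *ᵥ w) w]
  exact Real.abs_le_sqrt (hV.posSemidef.dotProduct_mulVec_sq_le u w)

end Matrix

theorem stmt_12_general (d : ℕ) (X : Set (Fin d → ℝ))
    (V : Matrix (Fin d) (Fin d) ℝ) (hV : V.PosDef)
    (θ θhat : Fin d → ℝ) (β : ℝ)
    (hconf : Real.sqrt ((θhat - θ) ⬝ᵥ (V *ᵥ (θhat - θ))) ≤ β)
    (xt : Fin d → ℝ)
    (hmax : ∀ x ∈ X,
      θhat ⬝ᵥ x + β * Real.sqrt (x ⬝ᵥ (V⁻¹ *ᵥ x)) ≤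
        θhat ⬝ᵥ xt + β * Real.sqrt (xt ⬝ᵥ (V⁻¹ *ᵥ xt))) :
    ∀ x ∈ X, θ ⬝ᵥ x - θ ⬝ᵥ xt ≤ 2 * β * Real.sqrt (xt ⬝ᵥ (V⁻¹ *ᵥ xt)) := by
  have herr (y : Fin d → ℝ) : |(θhat - θ) ⬝ᵥ y| ≤ β * √(y ⬝ᵥ (V⁻¹ *ᵥ y)) :=
    (hV.abs_dotProduct_le_sqrt_mul_sqrt_inv _ y).trans
      (mul_le_mul_of_nonneg_right hconf (Real.sqrt_nonneg _))
  intro x hx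
  have herr_x := abs_le.mp (herr x)
  have herr_xt := abs_le.mp (herr xt)
  simp only [sub_dotProduct] at herr_x herr_xt
  linarith [hmax x hx]

/-- Instantaneous regret of the UCB arm: if `‖θ̂ - θ*‖_V ≤ β` and `x_t`
maximizes the upper confidence bound `⟨θ̂, x⟩ + β·‖x‖_{V⁻¹}` over `X`, then
for every `x ∈ X`, `⟨θ*, x⟩ - ⟨θ*, x_t⟩ ≤ 2·β·‖x_t‖_{V⁻¹}`. -/
theorem stmt_12 (d : ℕ) (X : Set (Fin d → ℝ))
    (V : Matrix (Fin d) (Fin d) ℝ) (hV : V.PosDef)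
    (θ θhat : Fin d → ℝ) (β : ℝ) (hβ : 0 ≤ β)
    (hconf : Real.sqrt ((θhat - θ) ⬝ᵥ (V *ᵥ (θhat - θ))) ≤ β)
    (xt : Fin d → ℝ) (hxt : xt ∈ X)
    (hmax : ∀ x ∈ X,
      θhat ⬝ᵥ x + β * Real.sqrt (x ⬝ᵥ (V⁻¹ *ᵥ x)) ≤
        θhat ⬝ᵥ xt + β * Real.sqrt (xt ⬝ᵥ (V⁻¹ *ᵥ xt))) :
    ∀ x ∈ X, θ ⬝ᵥ x - θ ⬝ᵥ xt ≤ 2 * β * Real.sqrt (xt ⬝ᵥ (V⁻¹ *ᵥ xt)) :=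
  stmt_12_general d X V hV θ θhat β hconf xt hmax
end

section
/- Let x_1, …, x_t ∈ ℝ^d satisfy ‖x_s‖₂ ≤ 1 for all 1 ≤ s ≤ t, let α > 0, and define V̄_s = α·I_d + ∑_{j=1}^s x_j·x_jᵀ. Then: (i) if α ≥ 1, ∑_{s=1}^t ‖x_s‖²_{V̄_{s-1}⁻¹} ≤ 2·log(det(V̄_t)/α^d); and (ii) for any α > 0, det(V̄_t) ≤ (α + t/d)^d. -/
open Matrix Finset

/-!
Adding `x xᵀ` to a positive definite `V` multiplies `det V` by `1 + ‖x‖²_{V⁻¹}` (matrix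
determinant lemma), so `log det V̄_t - log det V̄_0 = ∑ log (1 + ‖x_s‖²_{V̄_{s-1}⁻¹})`. Since
`V̄_{s-1} ≥ α I ≥ I`, each `‖x_s‖²_{V̄_{s-1}⁻¹} ≤ ‖x_s‖² ≤ 1`, and `u ≤ 2 log (1 + u)` on `[0, 1]`
gives (i). For (ii), AM-GM on the eigenvalues bounds `det V̄_t` by `(tr V̄_t / d) ^ d`, and
`tr V̄_t = α d + ∑ ‖x_s‖² ≤ α d + t`.
-/

lemma Finset.sum_Icc_one_sub_pred {M : Type*} [AddCommGroup M] (f : ℕ → M) (t : ℕ) :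
    ∑ s ∈ Icc 1 t, (f s - f (s - 1)) = f t - f 0 := by
  induction t with
  | zero => simp
  | succ t ih =>
    rw [sum_Icc_succ_top (by omega), ih, Nat.add_sub_cancel]
    abel

lemma Real.le_two_mul_log_one_add {u : ℝ} (h0 : 0 ≤ u) (h2 : u ≤ 2) :
    u ≤ 2 * Real.log (1 + u) := by
  have h := Real.le_log_one_add_of_nonneg h0
  have hu : u ≤ 2 * (2 * u / (u + 2)) := by
    rw [mul_div_assoc', le_div_iff₀ (by linarith)]
    nlinarith
  linarith

lemma Real.prod_le_sum_div_card_pow {ι : Type*} (s : Finset ι) {f : ι → ℝ}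
    (hf : ∀ i ∈ s, 0 ≤ f i) : ∏ i ∈ s, f i ≤ ((∑ i ∈ s, f i) / #s) ^ #s := by
  rcases s.eq_empty_or_nonempty with rfl | hs
  · simp
  have hcard : (#s : ℝ) ≠ 0 := by exact_mod_cast hs.card_pos.ne'
  have hprod : 0 ≤ ∏ i ∈ s, f i := prod_nonneg hf
  have hmean : (∏ i ∈ s, f i) ^ (#s : ℝ)⁻¹ ≤ (∑ i ∈ s, f i) / #s := by
    rw [← Real.finsetProd_rpow s f hf, div_eq_inv_mul, mul_sum]
    refine Real.geom_mean_le_arith_mean_weighted s _ f (fun _ _ => by positivity) ?_ hf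
    rw [sum_const, nsmul_eq_mul, mul_inv_cancel₀ hcard]
  calc ∏ i ∈ s, f i = ((∏ i ∈ s, f i) ^ (#s : ℝ)⁻¹) ^ #s :=
        (Real.rpow_inv_natCast_pow hprod hs.card_pos.ne').symm
    _ ≤ ((∑ i ∈ s, f i) / #s) ^ #s := by gcongr

namespace Matrix

variable {n : Type*} [Fintype n] [DecidableEq n]

theorem det_add_vecMulVec {R : Type*} [CommRing R] {A : Matrix n n R} (hA : IsUnit A.det)
    (u v : n → R) : (A + vecMulVec u v).det = A.det * (1 + v ⬝ᵥ (A⁻¹ *ᵥ u)) := by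
  rw [vecMulVec_eq Unit, det_add_replicateCol_mul_replicateRow hA,
    det_unique (1 + replicateRow Unit v * A⁻¹ * replicateCol Unit u), add_apply,
    one_apply_eq, ← replicateRow_vecMul, replicateRow_mul_replicateCol_apply, dotProduct_mulVec]

theorem PosSemidef.det_le_trace_div_card_pow {A : Matrix n n ℝ} (hA : A.PosSemidef) :
    A.det ≤ (A.trace / Fintype.card n) ^ Fintype.card n := by
  rw [hA.isHermitian.det_eq_prod_eigenvalues, hA.isHermitian.trace_eq_sum_eigenvalues]
  simpa using Real.prod_le_sum_div_card_pow univ fun i _ => hA.eigenvalues_nonneg i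

theorem dotProduct_inv_mulVec_le {A : Matrix n n ℝ} {α : ℝ} (hα : 0 < α)
    (hA : (A - α • 1).PosSemidef) (x : n → ℝ) :
    x ⬝ᵥ (A⁻¹ *ᵥ x) ≤ (x ⬝ᵥ x) / α := by
  have hApos : A.PosDef := by
    simpa using (PosDef.one.smul hα).add_posSemidef hA
  set y := A⁻¹ *ᵥ x
  have hAy : A *ᵥ y = x := by
    rw [mulVec_mulVec, mul_nonsing_inv _ (isUnit_iff_ne_zero.mpr hApos.det_pos.ne'), one_mulVec]
  have hxy : x ⬝ᵥ y = y ⬝ᵥ (A *ᵥ y) := by rw [hAy, dotProduct_comm]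
  have hlower : α * (y ⬝ᵥ y) ≤ y ⬝ᵥ (A *ᵥ y) := by
    have := hA.dotProduct_mulVec_nonneg y
    rw [star_trivial, sub_mulVec, smul_mulVec, one_mulVec, dotProduct_sub, dotProduct_smul,
      smul_eq_mul] at this
    linarith
  have hcs : (x ⬝ᵥ y) ^ 2 ≤ (x ⬝ᵥ x) * (y ⬝ᵥ y) := by
    simpa only [dotProduct, sq] using sum_mul_sq_le_sq_mul_sq univ x y
  rw [le_div_iff₀ hα]
  rcases (hApos.posSemidef.dotProduct_mulVec_nonneg y).eq_or_lt with hzero | hpos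
  · rw [star_trivial] at hzero
    rw [hxy, ← hzero, zero_mul]
    exact dotProduct_self_star_nonneg x
  · rw [star_trivial, ← hxy] at hpos
    rw [← hxy] at hlower
    have hX : 0 ≤ x ⬝ᵥ x := dotProduct_self_star_nonneg x
    refine le_of_mul_le_mul_left ?_ hpos
    calc x ⬝ᵥ y * (x ⬝ᵥ y * α) = α * (x ⬝ᵥ y) ^ 2 := by ring
      _ ≤ α * ((x ⬝ᵥ x) * (y ⬝ᵥ y)) := mul_le_mul_of_nonneg_left hcs hα.le
      _ = x ⬝ᵥ x * (α * (y ⬝ᵥ y)) := by ring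
      _ ≤ x ⬝ᵥ x * x ⬝ᵥ y := mul_le_mul_of_nonneg_left hlower hX
      _ = x ⬝ᵥ y * x ⬝ᵥ x := mul_comm _ _

theorem sum_dotProduct_inv_mulVec_le_two_mul_log_det {V : ℕ → Matrix n n ℝ} {x : ℕ → n → ℝ}
    {t : ℕ} (hV : ∀ s ≤ t, (V s).PosDef)
    (hstep : ∀ s ∈ Icc 1 t, V s = V (s - 1) + vecMulVec (x s) (x s))
    (hle : ∀ s ∈ Icc 1 t, x s ⬝ᵥ ((V (s - 1))⁻¹ *ᵥ x s) ≤ 2) :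
    ∑ s ∈ Icc 1 t, x s ⬝ᵥ ((V (s - 1))⁻¹ *ᵥ x s) ≤ 2 * Real.log ((V t).det / (V 0).det) := by
  have hdet (s : ℕ) (hs : s ≤ t) : (V s).det ≠ 0 := (hV s hs).det_pos.ne'
  have hterm : ∀ s ∈ Icc 1 t, x s ⬝ᵥ ((V (s - 1))⁻¹ *ᵥ x s) ≤
      2 * (Real.log (V s).det - Real.log (V (s - 1)).det) := by
    intro s hs
    have hst : s - 1 ≤ t := by grind
    have hu : 0 ≤ x s ⬝ᵥ ((V (s - 1))⁻¹ *ᵥ x s) := by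
      simpa using (hV _ hst).inv.posSemidef.dotProduct_mulVec_nonneg (x s)
    rw [hstep s hs, det_add_vecMulVec (isUnit_iff_ne_zero.mpr (hdet _ hst)),
      Real.log_mul (hdet _ hst) (by positivity), add_sub_cancel_left]
    exact Real.le_two_mul_log_one_add hu (hle s hs)
  calc _ ≤ ∑ s ∈ Icc 1 t, 2 * (Real.log (V s).det - Real.log (V (s - 1)).det) :=
        sum_le_sum hterm
    _ = 2 * Real.log ((V t).det / (V 0).det) := by
      rw [← mul_sum, sum_Icc_one_sub_pred (fun s => Real.log (V s).det),
        Real.log_div (hdet t le_rfl) (hdet 0 (Nat.zero_le t))]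

end Matrix

section RegularizedGram

variable {n : Type*} [DecidableEq n]

def regularizedGram (α : ℝ) (x : ℕ → n → ℝ) (s : ℕ) : Matrix n n ℝ :=
  α • 1 + ∑ j ∈ Icc 1 s, vecMulVec (x j) (x j)

theorem regularizedGram_of_one_le (α : ℝ) (x : ℕ → n → ℝ) {s : ℕ} (hs : 1 ≤ s) :
    regularizedGram α x s = regularizedGram α x (s - 1) + vecMulVec (x s) (x s) := by
  obtain ⟨s, rfl⟩ := Nat.exists_eq_add_of_le' hs
  rw [regularizedGram, regularizedGram, sum_Icc_succ_top (by omega), Nat.add_sub_cancel, add_assoc]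

variable [Fintype n]

theorem regularizedGram_sub_smul_one_posSemidef (α : ℝ) (x : ℕ → n → ℝ) (s : ℕ) :
    (regularizedGram α x s - α • 1).PosSemidef := by
  rw [regularizedGram, add_sub_cancel_left]
  exact posSemidef_sum _ fun j _ => by simpa using posSemidef_vecMulVec_self_star (x j)

theorem regularizedGram_posDef {α : ℝ} (hα : 0 < α) (x : ℕ → n → ℝ) (s : ℕ) :
    (regularizedGram α x s).PosDef := by
  simpa using (PosDef.one.smul hα).add_posSemidef (regularizedGram_sub_smul_one_posSemidef α x s)

theorem det_regularizedGram_zero (α : ℝ) (x : ℕ → n → ℝ) :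
    (regularizedGram α x 0).det = α ^ Fintype.card n := by
  simp [regularizedGram]

theorem trace_regularizedGram (α : ℝ) (x : ℕ → n → ℝ) (s : ℕ) :
    (regularizedGram α x s).trace = α * Fintype.card n + ∑ j ∈ Icc 1 s, x j ⬝ᵥ x j := by
  simp [regularizedGram, trace_sum, trace_vecMulVec]

end RegularizedGram

/-- Elliptical potential lemma: with `‖x_s‖₂ ≤ 1` for `1 ≤ s ≤ t`, `α > 0` and
`V̄_s = α·I + ∑_{j=1}^s x_j x_jᵀ`: (i) if `α ≥ 1` then
`∑_{s=1}^t ‖x_s‖²_{V̄_{s-1}⁻¹} ≤ 2·log(det(V̄_t)/α^d)`, and (ii)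
`det(V̄_t) ≤ (α + t/d)^d`. -/
theorem stmt_13 (d t : ℕ) (x : ℕ → Fin d → ℝ)
    (hx : ∀ s, 1 ≤ s → s ≤ t → Real.sqrt (∑ i, x s i ^ 2) ≤ 1)
    (α : ℝ) (hα : 0 < α)
    (Vbar : ℕ → Matrix (Fin d) (Fin d) ℝ)
    (hVbar : ∀ s, Vbar s = α • (1 : Matrix (Fin d) (Fin d) ℝ) +
      ∑ j ∈ Finset.Icc 1 s, vecMulVec (x j) (x j)) :
    (1 ≤ α →
      ∑ s ∈ Finset.Icc 1 t, x s ⬝ᵥ ((Vbar (s - 1))⁻¹ *ᵥ x s) ≤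
        2 * Real.log ((Vbar t).det / α ^ d)) ∧
      (Vbar t).det ≤ (α + (t : ℝ) / d) ^ d := by
  obtain rfl : Vbar = regularizedGram α x := funext hVbar
  have hnorm : ∀ s ∈ Icc 1 t, x s ⬝ᵥ x s ≤ 1 := fun s hs => by
    simpa [dotProduct, sq] using hx s (mem_Icc.mp hs).1 (mem_Icc.mp hs).2
  have hpd := regularizedGram_posDef hα x
  refine ⟨fun hα1 => ?_, ?_⟩
  · have hdet0 : (regularizedGram α x 0).det = α ^ d := by
      simpa using det_regularizedGram_zero α x
    rw [← hdet0]
    refine sum_dotProduct_inv_mulVec_le_two_mul_log_det (fun s _ => hpd s)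
      (fun s hs => regularizedGram_of_one_le α x (mem_Icc.mp hs).1) fun s hs => ?_
    calc _ ≤ (x s ⬝ᵥ x s) / α :=
          dotProduct_inv_mulVec_le hα (regularizedGram_sub_smul_one_posSemidef α x _) _
      _ ≤ 2 := by
        rw [div_le_iff₀ hα]
        linarith [hnorm s hs]
  · have htrace : (regularizedGram α x t).trace / d ≤ α + t / d := by
      rw [trace_regularizedGram, Fintype.card_fin, add_div, mul_div_assoc]
      gcongr
      · exact mul_le_of_le_one_right hα.le (div_self_le_one _)
      · simpa using sum_le_sum hnorm
    calc _ ≤ ((regularizedGram α x t).trace / d) ^ d := by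
          simpa using (hpd t).posSemidef.det_le_trace_div_card_pow
      _ ≤ (α + t / d) ^ d :=
          pow_le_pow_left₀ (div_nonneg (hpd t).posSemidef.trace_nonneg d.cast_nonneg) htrace d
end

section
/- Let T ≥ 1 and n ≤ T be natural numbers, let m > 0 be real, and let b_1, …, b_n be real numbers with 0 ≤ b_t ≤ m/2 for every t. Then ∏_{t=1}^n (m - b_t)^{1/T} ≥ m^{n/T} · (1 - (2/(m·T))·∑_{t=1}^n b_t). -/
/-!
Writing `x = 2b/m ∈ [0, 1]`, the bound `(1 - x/T)^T ≤ e^{-x} ≤ 1 - x/2` gives, after taking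
`T`-th roots, `(m - b)^{1/T} ≥ m^{1/T} (1 - x/T)` for each factor. Multiplying these and applying
the Weierstrass product inequality `∏ (1 - cₜ) ≥ 1 - ∑ cₜ` (valid for `cₜ ∈ [0, 1]`) yields the claim.
-/

open Finset

theorem Finset.one_sub_sum_le_prod_one_sub {ι R : Type*} [CommRing R] [LinearOrder R]
    [IsStrictOrderedRing R] (s : Finset ι) {c : ι → R} (hc : ∀ i ∈ s, 0 ≤ c i ∧ c i ≤ 1) :
    1 - ∑ i ∈ s, c i ≤ ∏ i ∈ s, (1 - c i) := by
  classical
  induction s using Finset.induction_on with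
  | empty => simp
  | insert a s ha ih =>
    rw [prod_insert ha, sum_insert ha]
    obtain ⟨hca₀, hca₁⟩ := hc a (mem_insert_self a s)
    have hs : ∀ i ∈ s, 0 ≤ c i ∧ c i ≤ 1 := fun i hi ↦ hc i (mem_insert_of_mem hi)
    have hP : ∏ i ∈ s, (1 - c i) ≤ 1 :=
      prod_le_one (fun i hi ↦ sub_nonneg.2 (hs i hi).2) fun i hi ↦ sub_le_self _ (hs i hi).1
    nlinarith [ih hs]

theorem Real.exp_neg_le_one_sub_half {t : ℝ} (ht₀ : 0 ≤ t) (ht₁ : t ≤ 1) :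
    exp (-t) ≤ 1 - t / 2 := by
  have hexp : 1 + t ≤ exp t := by linarith [add_one_le_exp t]
  rw [exp_neg, inv_le_iff_one_le_mul₀ (exp_pos t)]
  nlinarith

theorem Real.one_sub_div_pow_le_one_sub_half {T : ℕ} (hT : 1 ≤ T) {t : ℝ} (ht₀ : 0 ≤ t)
    (ht₁ : t ≤ 1) : (1 - t / T) ^ T ≤ 1 - t / 2 :=
  (one_sub_div_pow_le_exp_neg (ht₁.trans (by exact_mod_cast hT))).trans
    (exp_neg_le_one_sub_half ht₀ ht₁)

theorem mul_one_sub_le_sub_rpow_one_div {T : ℕ} (hT : 1 ≤ T) {m b : ℝ} (hm : 0 < m)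
    (hb₀ : 0 ≤ b) (hb : b ≤ m / 2) :
    m ^ ((1 : ℝ) / T) * (1 - 2 / (m * T) * b) ≤ (m - b) ^ ((1 : ℝ) / T) := by
  have hT₀ : (0 : ℝ) < T := by exact_mod_cast hT
  have hT₁ : (1 : ℝ) ≤ T := by exact_mod_cast hT
  have hx₀ : 0 ≤ 2 * b / m := by positivity
  have hx₁ : 2 * b / m ≤ 1 := by rw [div_le_one hm]; linarith
  have hfactor : 2 / (m * T) * b = 2 * b / m / T := by field_simp
  have hbase : 0 ≤ 1 - 2 * b / m / T := by
    rw [sub_nonneg, div_le_one hT₀]; linarith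
  rw [hfactor, one_div, Real.le_rpow_inv_iff_of_pos (by positivity) (by linarith) hT₀,
    Real.rpow_natCast, mul_pow, Real.rpow_inv_natCast_pow hm.le (by omega)]
  calc m * (1 - 2 * b / m / T) ^ T ≤ m * (1 - 2 * b / m / 2) := by
        gcongr; exact Real.one_sub_div_pow_le_one_sub_half hT hx₀ hx₁
    _ = m - b := by field_simp

theorem stmt_18_general (T n : ℕ) (hT : 1 ≤ T) (m : ℝ) (hm : 0 < m)
    (b : ℕ → ℝ) (hb : ∀ t ∈ Finset.range n, 0 ≤ b t ∧ b t ≤ m / 2) :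
    (∏ t ∈ Finset.range n, (m - b t) ^ ((1 : ℝ) / T)) ≥
      m ^ ((n : ℝ) / T) * (1 - 2 / (m * T) * ∑ t ∈ Finset.range n, b t) := by
  have hT₁ : (1 : ℝ) ≤ T := by exact_mod_cast hT
  have hc : ∀ t ∈ range n, 0 ≤ 2 / (m * T) * b t ∧ 2 / (m * T) * b t ≤ 1 := fun t ht ↦ by
    obtain ⟨hb₀, hb₁⟩ := hb t ht
    refine ⟨by positivity, ?_⟩
    rw [div_mul_eq_mul_div, div_le_one (by positivity)]
    nlinarith
  calc m ^ ((n : ℝ) / T) * (1 - 2 / (m * T) * ∑ t ∈ range n, b t)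
      ≤ m ^ ((n : ℝ) / T) * ∏ t ∈ range n, (1 - 2 / (m * T) * b t) := by
        rw [mul_sum]
        exact mul_le_mul_of_nonneg_left (one_sub_sum_le_prod_one_sub _ hc) (by positivity)
    _ = ∏ t ∈ range n, m ^ ((1 : ℝ) / T) * (1 - 2 / (m * T) * b t) := by
        rw [prod_mul_distrib, prod_const, card_range, ← Real.rpow_natCast,
          ← Real.rpow_mul hm.le, one_div_mul_eq_div]
    _ ≤ ∏ t ∈ range n, (m - b t) ^ ((1 : ℝ) / T) :=
        prod_le_prod (fun t ht ↦ mul_nonneg (by positivity) (sub_nonneg.2 (hc t ht).2))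
          fun t ht ↦ mul_one_sub_le_sub_rpow_one_div hT hm (hb t ht).1 (hb t ht).2

/-- Aggregation inequality for the Nash Social Welfare: for `n ≤ T`, `m > 0`
and `0 ≤ b_t ≤ m/2` for all `t`,
`∏_{t=1}^n (m - b_t)^{1/T} ≥ m^{n/T} · (1 - (2/(m·T))·∑_{t=1}^n b_t)`,
where powers are real powers. -/
theorem stmt_18 (T n : ℕ) (hT : 1 ≤ T) (hn : n ≤ T) (m : ℝ) (hm : 0 < m)
    (b : ℕ → ℝ) (hb : ∀ t ∈ Finset.range n, 0 ≤ b t ∧ b t ≤ m / 2) :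
    (∏ t ∈ Finset.range n, (m - b t) ^ ((1 : ℝ) / T)) ≥
      m ^ ((n : ℝ) / T) * (1 - 2 / (m * T) * ∑ t ∈ Finset.range n, b t) :=
  stmt_18_general T n hT m hm b hb
end
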